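/- Let λ ≥ -1/2 be a real number, Δ ≥ 3, and n a positive integer. Let U₁ be a unicyclic graph with n vertices and maximum degree Δ having a vertex a of degree Δ not on the cycle, adjacent to Δ-1 leaves, with a cycle vertex b satisfying d(a,b) = 1 and deg(b) = 3, and all other vertices of degree at most 2. Let U₃ be a unicyclic graph with n vertices and maximum degree Δ having a vertex a' of degree Δ on the cycle, adjacent to Δ-2 leaves, with all other vertices of degree at most 2. Then GRM_λ(U₁) − GRM_λ(U₃) = 2(2+λ) > 0; in particular GRM_λ(U₁) > GRM_λ(U₃). -/

import Mathlib

open SimpleGraph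

/-- Degree of a vertex (classical decidability). -/
noncomputable def deg {V : Type*} [Fintype V] (G : SimpleGraph V) (v : V) : ℕ :=
  letI := Classical.decEq V
  letI : DecidableRel G.Adj := Classical.decRel _
  G.degree v

/-- Maximum degree of a graph (classical decidability). -/
noncomputable def maxDeg {V : Type*} [Fintype V] (G : SimpleGraph V) : ℕ :=
  letI := Classical.decEq V
  letI : DecidableRel G.Adj := Classical.decRel _
  G.maxDegree

/-- The general reduced second Zagreb index
`GRM_λ(G) = Σ_{ab ∈ E(G)} (deg a + λ)(deg b + λ)`. -/
noncomputable def GRM {V : Type*} [Fintype V] (l : ℝ) (G : SimpleGraph V) : ℝ :=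
  letI := Classical.decEq V
  letI : DecidableRel G.Adj := Classical.decRel _
  ∑ e ∈ G.edgeFinset,
    Sym2.lift ⟨fun a b => ((G.degree a : ℝ) + l) * ((G.degree b : ℝ) + l),
      fun a b => by ring⟩ e

/-- A unicyclic graph: connected with exactly as many edges as vertices. -/
def IsUnicyclic {V : Type*} [Fintype V] (G : SimpleGraph V) : Prop :=
  G.Connected ∧ G.edgeSet.ncard = Fintype.card V

/-- A vertex lies on a cycle of `G`. -/
def OnCycle {V : Type*} (G : SimpleGraph V) (v : V) : Prop :=
  ∃ (u : V) (w : G.Walk u u), w.IsCycle ∧ v ∈ w.support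

/-!
Write `deg v + λ = (2 + λ) + (deg v - 2)`. Summing over the edges,
`GRM_λ = m (2 + λ)² + (2 + λ) Σ_v deg v (deg v - 2) + Σ_{uv} (deg u - 2)(deg v - 2)`.
In a unicyclic graph `m = n`, so the excesses `deg v - 2` sum to zero; for the degree patterns
of `U₁` and `U₃` this forces every leaf to hang at the vertex of degree `Δ`, and then only edges
at that vertex contribute to the last sum. Both graphs thus have
`GRM_λ = n (2 + λ)² + (2 + λ)((Δ - 1)(Δ - 2) + 2k) - (Δ - 2)²`, where `k ∈ {1, 0}` counts the
neighbour of degree three.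
-/
open Finset

section EdgeSums

variable {V : Type*} [Fintype V] [DecidableEq V] (G : SimpleGraph V) [DecidableRel G.Adj]

theorem SimpleGraph.sum_darts_edge {M : Type*} [AddCommMonoid M] (F : Sym2 V → M) :
    ∑ d : G.Dart, F d.edge = 2 • ∑ e ∈ G.edgeFinset, F e := by
  rw [← sum_fiberwise_of_maps_to (g := Dart.edge) (t := G.edgeFinset)
    (fun d _ => mem_edgeFinset.2 d.edge_mem), smul_sum]
  refine sum_congr rfl fun e he => ?_
  rw [sum_congr rfl fun d hd => congrArg F (mem_filter.1 hd).2, sum_const,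
    G.dart_edge_fiber_card e (mem_edgeFinset.1 he)]

theorem SimpleGraph.sum_darts_fst {M : Type*} [AddCommMonoid M] (f : V → M) :
    ∑ d : G.Dart, f d.fst = ∑ v, G.degree v • f v := by
  rw [← sum_fiberwise_of_maps_to (g := fun d : G.Dart => d.fst) (t := univ)
    (fun _ _ => mem_univ _)]
  refine sum_congr rfl fun v _ => ?_
  rw [sum_congr rfl fun d hd => congrArg f (mem_filter.1 hd).2, sum_const,
    G.dart_fst_fiber_card_eq_degree]

theorem SimpleGraph.sum_edgeFinset_add (f : V → ℝ) :
    ∑ e ∈ G.edgeFinset, Sym2.lift ⟨fun u v => f u + f v, fun _ _ => add_comm _ _⟩ e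
      = ∑ v, (G.degree v : ℝ) * f v := by
  have hsymm : ∑ d : G.Dart, f d.snd = ∑ d : G.Dart, f d.fst :=
    Equiv.sum_comp (Dart.symm_involutive.toPerm _) fun d : G.Dart => f d.fst
  have h := G.sum_darts_edge (Sym2.lift ⟨fun u v => f u + f v, fun _ _ => add_comm _ _⟩)
  simp only [Dart.edge, Sym2.lift_mk, sum_add_distrib, hsymm, G.sum_darts_fst, nsmul_eq_mul,
    Nat.cast_ofNat] at h
  linarith

theorem SimpleGraph.sum_edgeFinset_eq_sum_neighborFinset {M : Type*} [AddCommMonoid M]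
    (F : Sym2 V → M) (a : V) (hF : ∀ e ∈ G.edgeFinset, a ∉ e → F e = 0) :
    ∑ e ∈ G.edgeFinset, F e = ∑ w ∈ G.neighborFinset a, F s(a, w) := by
  rw [← sum_image fun _ _ _ _ => Sym2.congr_right.1]
  refine (sum_subset (fun e he => ?_) fun e he hea => hF e he fun ha => hea ?_).symm
  · obtain ⟨w, hw, rfl⟩ := mem_image.1 he
    exact mem_edgeFinset.2 ((mem_neighborFinset _ _ _).1 hw)
  · obtain ⟨w, rfl⟩ := Sym2.mem_iff_exists.1 ha
    exact mem_image_of_mem _ ((mem_neighborFinset _ _ _).2 (mem_edgeFinset.1 he))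

end EdgeSums

section Zagreb

variable {V : Type*} [Fintype V] (G : SimpleGraph V) [DecidableRel G.Adj]

theorem deg_eq_degree (v : V) : deg G v = G.degree v := by
  unfold deg; congr!

theorem GRM_eq_sum (l : ℝ) : GRM l G = ∑ e ∈ G.edgeFinset,
    Sym2.lift ⟨fun u v => ((G.degree u : ℝ) + l) * (G.degree v + l),
      fun _ _ => mul_comm _ _⟩ e := by
  unfold GRM; congr!

theorem GRM_eq_sum_degree_sub_two [DecidableEq V] (l : ℝ) : GRM l G
    = #G.edgeFinset * (2 + l) ^ 2 + (2 + l) * ∑ v, (G.degree v : ℝ) * (G.degree v - 2)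
      + ∑ e ∈ G.edgeFinset, Sym2.lift ⟨fun u v => ((G.degree u : ℝ) - 2) * (G.degree v - 2),
          fun _ _ => mul_comm _ _⟩ e := by
  rw [GRM_eq_sum, ← G.sum_edgeFinset_add, mul_sum, ← nsmul_eq_mul, ← sum_const,
    ← sum_add_distrib, ← sum_add_distrib]
  refine sum_congr rfl fun e _ => ?_
  induction e using Sym2.ind
  simp only [Sym2.lift_mk]
  ring

end Zagreb

section HubConfig

variable {V : Type*} [Fintype V]

def SimpleGraph.leafFinset (G : SimpleGraph V) [DecidableRel G.Adj] : Finset V :=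
  {v | G.degree v = 1}

@[simp]
theorem SimpleGraph.mem_leafFinset {G : SimpleGraph V} [DecidableRel G.Adj] {v : V} :
    v ∈ G.leafFinset ↔ G.degree v = 1 := by
  simp [leafFinset]

theorem SimpleGraph.sum_leafFinset (G : SimpleGraph V) [DecidableRel G.Adj] (φ : ℕ → ℝ) :
    ∑ v ∈ G.leafFinset, φ (G.degree v) = #G.leafFinset * φ 1 := by
  rw [sum_congr rfl fun v hv => by rw [mem_leafFinset.1 hv], sum_const, nsmul_eq_mul]

/-- The degree pattern shared by `U₁` (hub `a`, `s = {b}`) and `U₃` (hub `a'`, `s = ∅`). -/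
structure IsHubConfig (G : SimpleGraph V) [DecidableRel G.Adj] (a : V) (s : Finset V) : Prop where
  card_edgeFinset : #G.edgeFinset = Fintype.card V
  degree_pos : ∀ v, 0 < G.degree v
  two_le_degree : 2 ≤ G.degree a
  adj_of_mem : ∀ v ∈ s, G.Adj a v
  degree_of_mem : ∀ v ∈ s, G.degree v = 3
  card_le_one : #s ≤ 1
  degree_le_two : ∀ v, v ≠ a → v ∉ s → G.degree v ≤ 2
  card_leaves_adj : #{v | G.Adj a v ∧ G.degree v = 1} + 2 = G.degree a + #s

namespace IsHubConfig

variable {G : SimpleGraph V} [DecidableRel G.Adj] {a : V} {s : Finset V} (h : IsHubConfig G a s)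
include h

theorem degree_eq_two {v : V} (hva : v ≠ a) (hvs : v ∉ s) (hv : G.degree v ≠ 1) :
    G.degree v = 2 := by
  have := h.degree_pos v
  have := h.degree_le_two v hva hvs
  omega

theorem sum_univ_eq_of_degree_two [DecidableEq V] (f : V → ℝ)
    (hf : ∀ v, G.degree v = 2 → f v = 0) :
    ∑ v, f v = f a + ∑ v ∈ s, f v + ∑ v ∈ G.leafFinset, f v := by
  have ha_s : a ∉ s := fun ha => G.irrefl (h.adj_of_mem a ha)
  have ha_leaf : a ∉ G.leafFinset := by
    rw [mem_leafFinset]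
    have := h.two_le_degree
    omega
  have hdisj : Disjoint s G.leafFinset := by
    refine disjoint_left.2 fun v hvs hv => ?_
    simp [h.degree_of_mem v hvs] at hv
  rw [← sum_subset (subset_univ (insert a (s ∪ G.leafFinset))),
    sum_insert (by simp [ha_s, ha_leaf]), sum_union hdisj, add_assoc]
  intro v _ hv
  simp only [mem_insert, mem_union, mem_leafFinset, not_or] at hv
  exact hf v (h.degree_eq_two hv.1 hv.2.1 hv.2.2)

theorem sum_degree_of_mem (φ : ℕ → ℝ) : ∑ v ∈ s, φ (G.degree v) = #s * φ 3 := by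
  rw [sum_congr rfl fun v hv => by rw [h.degree_of_mem v hv], sum_const, nsmul_eq_mul]

theorem card_leafFinset_add_two : #G.leafFinset + 2 = G.degree a + #s := by
  classical
  have hsum : ∑ v, ((G.degree v : ℝ) - 2) = 0 := by
    rw [sum_sub_distrib, ← Nat.cast_sum, sum_degrees_eq_twice_card_edges, h.card_edgeFinset,
      sum_const, card_univ, nsmul_eq_mul]
    push_cast
    ring
  rw [h.sum_univ_eq_of_degree_two _ fun v hv => by simp [hv],
    h.sum_degree_of_mem fun k => (k : ℝ) - 2, G.sum_leafFinset fun k => (k : ℝ) - 2] at hsum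
  norm_num at hsum
  exact_mod_cast (by linarith : (#G.leafFinset : ℝ) + 2 = G.degree a + #s)

theorem adj_of_degree_eq_one {v : V} (hv : G.degree v = 1) : G.Adj a v := by
  have hsub : ({v | G.Adj a v ∧ G.degree v = 1} : Finset V) ⊆ G.leafFinset :=
    fun v hv => mem_leafFinset.2 (mem_filter.1 hv).2.2
  have heq := eq_of_subset_of_card_le hsub <| by
    have := h.card_leafFinset_add_two
    have := h.card_leaves_adj
    omega
  have : v ∈ ({v | G.Adj a v ∧ G.degree v = 1} : Finset V) := heq ▸ by simp [hv]
  exact (mem_filter.1 this).2.1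

theorem eq_of_adj_of_degree_eq_one {v w : V} (hv : G.degree v = 1) (hvw : G.Adj v w) : w = a :=
  (degree_eq_one_iff_existsUnique_adj.1 hv).unique hvw (h.adj_of_degree_eq_one hv).symm

theorem cast_card_leafFinset_add_two : (#G.leafFinset : ℝ) + 2 = G.degree a + #s := by
  exact_mod_cast h.card_leafFinset_add_two

theorem sum_degree_mul_sub_two [DecidableEq V] :
    ∑ v, (G.degree v : ℝ) * (G.degree v - 2)
      = (G.degree a - 1) * (G.degree a - 2) + 2 * #s := by
  rw [h.sum_univ_eq_of_degree_two _ fun v hv => by simp [hv],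
    h.sum_degree_of_mem fun k => (k : ℝ) * (k - 2), G.sum_leafFinset fun k => (k : ℝ) * (k - 2)]
  norm_num
  linear_combination -h.cast_card_leafFinset_add_two

theorem sum_neighborFinset_degree_sub_two [DecidableEq V] :
    ∑ w ∈ G.neighborFinset a, ((G.degree w : ℝ) - 2) = #s - #G.leafFinset := by
  rw [neighborFinset_eq_filter, sum_filter,
    h.sum_univ_eq_of_degree_two _ fun v hv => by simp [hv], if_neg G.irrefl,
    sum_congr rfl fun v hv => if_pos (h.adj_of_mem v hv),
    sum_congr rfl fun v hv => if_pos (h.adj_of_degree_eq_one (mem_leafFinset.1 hv)),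
    h.sum_degree_of_mem fun k => (k : ℝ) - 2, G.sum_leafFinset fun k => (k : ℝ) - 2]
  ring

-- Only edges at the hub contribute: the other endpoints of edges at leaves and at `s` are the hub.
theorem sum_edgeFinset_degree_sub_two_mul [DecidableEq V] :
    ∑ e ∈ G.edgeFinset, Sym2.lift ⟨fun u v => ((G.degree u : ℝ) - 2) * (G.degree v - 2),
      fun _ _ => mul_comm _ _⟩ e = -((G.degree a : ℝ) - 2) ^ 2 := by
  have hvanish : ∀ e ∈ G.edgeFinset, a ∉ e → Sym2.lift ⟨fun u v => ((G.degree u : ℝ) - 2) *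
      (G.degree v - 2), fun _ _ => mul_comm _ _⟩ e = 0 := by
    intro e he hae
    induction e using Sym2.ind with | h u w => ?_
    have huw : G.Adj u w := mem_edgeFinset.1 he
    have hua : u ≠ a := fun hu => hae (hu ▸ Sym2.mem_mk_left u w)
    have hwa : w ≠ a := fun hw => hae (hw ▸ Sym2.mem_mk_right u w)
    rcases eq_or_ne (G.degree u) 2 with hu | hu
    · simp [hu]
    rcases eq_or_ne (G.degree w) 2 with hw | hw
    · simp [hw]
    have hus : u ∈ s := by
      by_contra hus
      exact hu (h.degree_eq_two hua hus fun hu1 => hwa (h.eq_of_adj_of_degree_eq_one hu1 huw))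
    have hws : w ∈ s := by
      by_contra hws
      exact hw <| h.degree_eq_two hwa hws fun hw1 =>
        hua (h.eq_of_adj_of_degree_eq_one hw1 huw.symm)
    exact absurd (Finset.card_le_one.1 h.card_le_one u hus w hws) huw.ne
  rw [G.sum_edgeFinset_eq_sum_neighborFinset _ a hvanish]
  simp only [Sym2.lift_mk]
  rw [← mul_sum, h.sum_neighborFinset_degree_sub_two]
  linear_combination (2 - (G.degree a : ℝ)) * h.cast_card_leafFinset_add_two

theorem GRM_eq (l : ℝ) : GRM l G = Fintype.card V * (2 + l) ^ 2
    + (2 + l) * ((G.degree a - 1) * (G.degree a - 2) + 2 * #s) - ((G.degree a : ℝ) - 2) ^ 2 := by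
  classical
  rw [GRM_eq_sum_degree_sub_two, h.card_edgeFinset, h.sum_degree_mul_sub_two,
    h.sum_edgeFinset_degree_sub_two_mul]
  ring

end IsHubConfig

end HubConfig

section Unicyclic

variable {V : Type*} [Fintype V] {G : SimpleGraph V} [DecidableRel G.Adj]

theorem ncard_setOf_adj_deg_eq_one (a : V) :
    {v | G.Adj a v ∧ deg G v = 1}.ncard = #{v | G.Adj a v ∧ G.degree v = 1} := by
  simp only [deg_eq_degree]
  rw [Set.ncard_eq_toFinset_card', Set.toFinset_ofPred]

theorem IsUnicyclic.isHubConfig (hG : IsUnicyclic G) {a : V} {s : Finset V}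
    (ha : 2 ≤ deg G a) (hs : ∀ v ∈ s, G.Adj a v ∧ deg G v = 3) (hs1 : #s ≤ 1)
    (hother : ∀ v, v ≠ a → v ∉ s → deg G v ≤ 2)
    (hleaves : {v | G.Adj a v ∧ deg G v = 1}.ncard + 2 = deg G a + #s) :
    IsHubConfig G a s where
  card_edgeFinset := by rw [← Set.ncard_coe_finset, coe_edgeFinset, hG.2]
  degree_pos v := by
    have : Nontrivial V :=
      nontrivial_of_degree_ne_zero (G := G) (v := a) (by rw [← deg_eq_degree]; omega)
    exact hG.1.preconnected.degree_pos_of_nontrivial v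
  two_le_degree := deg_eq_degree G a ▸ ha
  adj_of_mem v hv := (hs v hv).1
  degree_of_mem v hv := deg_eq_degree G v ▸ (hs v hv).2
  card_le_one := hs1
  degree_le_two v hva hvs := deg_eq_degree G v ▸ hother v hva hvs
  card_leaves_adj := by rw [← ncard_setOf_adj_deg_eq_one, hleaves, deg_eq_degree]

end Unicyclic

theorem stmt16_general {V₁ V₃ : Type*} [Fintype V₁] [Fintype V₃]
    (l : ℝ) (hl : -1/2 ≤ l) (n Δ : ℕ) (hΔ3 : 3 ≤ Δ)
    (U₁ : SimpleGraph V₁) (hU₁ : IsUnicyclic U₁)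
    (hcard₁ : Fintype.card V₁ = n)
    (a : V₁) (ha : deg U₁ a = Δ)
    (hleaves₁ : {v : V₁ | U₁.Adj a v ∧ deg U₁ v = 1}.ncard = Δ - 1)
    (b : V₁) (hdist₁ : U₁.dist a b = 1)
    (hdegb : deg U₁ b = 3)
    (hother₁ : ∀ c : V₁, c ≠ a → c ≠ b → deg U₁ c ≤ 2)
    (U₃ : SimpleGraph V₃) (hU₃ : IsUnicyclic U₃)
    (hcard₃ : Fintype.card V₃ = n)
    (a' : V₃) (ha' : deg U₃ a' = Δ)
    (hleaves₃ : {v : V₃ | U₃.Adj a' v ∧ deg U₃ v = 1}.ncard = Δ - 2)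
    (hother₃ : ∀ c : V₃, c ≠ a' → deg U₃ c ≤ 2) :
    GRM l U₁ - GRM l U₃ = 2 * (2 + l) ∧ (0 : ℝ) < 2 * (2 + l) ∧
      GRM l U₃ < GRM l U₁ := by
  classical
  have hadj : U₁.Adj a b := dist_eq_one_iff_adj.1 hdist₁
  have h₁ : IsHubConfig U₁ a {b} :=
    hU₁.isHubConfig (by omega) (by simpa [hadj] using hdegb) (by simp)
      (fun c hca hcb => hother₁ c hca (by simpa using hcb))
      (by rw [hleaves₁, ha, card_singleton]; omega)
  have h₃ : IsHubConfig U₃ a' ∅ :=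
    hU₃.isHubConfig (by omega) (by simp) (by simp) (fun c hca _ => hother₃ c hca)
      (by rw [hleaves₃, ha', card_empty]; omega)
  have hdiff : GRM l U₁ - GRM l U₃ = 2 * (2 + l) := by
    rw [h₁.GRM_eq, h₃.GRM_eq, ← deg_eq_degree, ← deg_eq_degree, ha, ha', hcard₁, hcard₃,
      card_singleton, card_empty]
    push_cast
    ring
  exact ⟨hdiff, by linarith, by linarith⟩

theorem stmt16 {V₁ V₃ : Type*} [Fintype V₁] [Fintype V₃]
    (l : ℝ) (hl : -1/2 ≤ l) (n Δ : ℕ) (hΔ3 : 3 ≤ Δ) (hn : 0 < n)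
    (U₁ : SimpleGraph V₁) (hU₁ : IsUnicyclic U₁)
    (hcard₁ : Fintype.card V₁ = n) (hmax₁ : maxDeg U₁ = Δ)
    (a : V₁) (ha : deg U₁ a = Δ) (hacyc : ¬ OnCycle U₁ a)
    (hleaves₁ : {v : V₁ | U₁.Adj a v ∧ deg U₁ v = 1}.ncard = Δ - 1)
    (b : V₁) (hbcyc : OnCycle U₁ b) (hdist₁ : U₁.dist a b = 1)
    (hdegb : deg U₁ b = 3)
    (hother₁ : ∀ c : V₁, c ≠ a → c ≠ b → deg U₁ c ≤ 2)
    (U₃ : SimpleGraph V₃) (hU₃ : IsUnicyclic U₃)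
    (hcard₃ : Fintype.card V₃ = n) (hmax₃ : maxDeg U₃ = Δ)
    (a' : V₃) (ha' : deg U₃ a' = Δ) (hacyc' : OnCycle U₃ a')
    (hleaves₃ : {v : V₃ | U₃.Adj a' v ∧ deg U₃ v = 1}.ncard = Δ - 2)
    (hother₃ : ∀ c : V₃, c ≠ a' → deg U₃ c ≤ 2) :
    GRM l U₁ - GRM l U₃ = 2 * (2 + l) ∧ (0 : ℝ) < 2 * (2 + l) ∧
      GRM l U₃ < GRM l U₁ :=
  stmt16_general l hl n Δ hΔ3 U₁ hU₁ hcard₁ a ha hleaves₁ b hdist₁ hdegb hother₁ U₃ hU₃ hcard₃ a'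
    ha' hleaves₃ hother₃
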